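/- T is quasimonotone if and only if M(T^ν, K) ⊆ M(T, K) for every subset K ⊆ X, where M(S, K) denotes the solution set of the Minty variational inequality for S on K. Moreover, if M(T^ν, K) = M(T, K) for every K ⊆ X, then T is pre-maximal quasimonotone. -/

import Mathlib

/-!
Both directions rest on one observation: if two pairs `p`, `q` violate the quasimonotone
relation, then on the two-point set `K = {p.1, q.1}` the point `p.1` solves the Minty
inequality for any operator all of whose elements are quasimonotonically related to `p`,
while it fails the Minty inequality for any operator containing `q`.
-/

open NormedSpace

variable {X : Type*} [NormedAddCommGroup X] [NormedSpace ℝ X]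

/-- quasimonotone relation: (x,x*) ∼q (y,y*) iff min{⟨y−x,x*⟩, ⟨x−y,y*⟩} ≤ 0 -/
def qrel (p q : X × StrongDual ℝ X) : Prop :=
  min (p.2 (q.1 - p.1)) (q.2 (p.1 - q.1)) ≤ 0

/-- quasimonotone polar -/
def qpolar (T : Set (X × StrongDual ℝ X)) : Set (X × StrongDual ℝ X) :=
  {p | ∀ q ∈ T, qrel p q}

/-- imagewise conic hull of an operator -/
def coneOp (T : Set (X × StrongDual ℝ X)) : Set (X × StrongDual ℝ X) :=
  {p | ∃ t : ℝ, 0 ≤ t ∧ ∃ v, (p.1, v) ∈ T ∧ p.2 = t • v}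

def QuasiMono (T : Set (X × StrongDual ℝ X)) : Prop := ∀ p ∈ T, ∀ q ∈ T, qrel p q

def MaxQuasiMono (T : Set (X × StrongDual ℝ X)) : Prop :=
  QuasiMono T ∧ ∀ S, QuasiMono S → T ⊆ S → S = T

def Vset (T : Set (X × StrongDual ℝ X)) (x : X) : Set X :=
  {y | ∃ y' : StrongDual ℝ X, (y, y') ∈ T ∧ 0 < y' (x - y)}

/-- the image T^ν(x) of the quasimonotone polar -/
def polarIm (T : Set (X × StrongDual ℝ X)) (x : X) : Set (StrongDual ℝ X) :=
  {x' | (x, x') ∈ qpolar T}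

/-- normal cone of C at x (no convexity or membership assumed) -/
def normalCone (C : Set X) (x : X) : Set (StrongDual ℝ X) :=
  {x' | ∀ y ∈ C, x' (y - x) ≤ 0}

def im (T : Set (X × StrongDual ℝ X)) (x : X) : Set (StrongDual ℝ X) := {v | (x, v) ∈ T}

/-- effective domain: T(u) nonempty and ≠ {0} -/
def edom (T : Set (X × StrongDual ℝ X)) : Set X :=
  {u | (im T u).Nonempty ∧ im T u ≠ {0}}

/-- conic hull of a set in the dual -/
def coneSet (A : Set (StrongDual ℝ X)) : Set (StrongDual ℝ X) :=
  {v | ∃ t : ℝ, 0 ≤ t ∧ ∃ a ∈ A, v = t • a}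

def Eset (T : Set (X × StrongDual ℝ X)) : Set X := {x | Vset T x = ∅}

/-- solution set of the Minty variational inequality for S on K -/
def Minty (S : Set (X × StrongDual ℝ X)) (K : Set X) : Set X :=
  {x ∈ K | ∀ q ∈ S, q.1 ∈ K → q.2 (x - q.1) ≤ 0}

def AEMaxQuasiMono (T : Set (X × StrongDual ℝ X)) : Prop :=
  QuasiMono T ∧ ∀ S, QuasiMono S → (∀ x ∈ edom T, im T x ⊆ coneSet (im S x)) →
    (∀ x ∈ edom T, coneSet (im T x) = coneSet (im S x)) ∧ edom T = edom S

theorem qrel_comm {p q : X × StrongDual ℝ X} : qrel p q ↔ qrel q p := by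
  simp only [qrel, min_comm]

theorem quasiMono_iff_subset_qpolar {T : Set (X × StrongDual ℝ X)} :
    QuasiMono T ↔ T ⊆ qpolar T :=
  Iff.rfl

theorem subset_qpolar_qpolar (T : Set (X × StrongDual ℝ X)) : T ⊆ qpolar (qpolar T) :=
  fun _ hp _ hr => qrel_comm.1 (hr _ hp)

theorem minty_anti {S S' : Set (X × StrongDual ℝ X)} (h : S ⊆ S') (K : Set X) :
    Minty S' K ⊆ Minty S K :=
  fun _ hx => ⟨hx.1, fun q hq hqK => hx.2 q (h hq) hqK⟩

theorem mem_minty_pair {S : Set (X × StrongDual ℝ X)} {x y : X}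
    (h : ∀ r ∈ S, r.1 = y → r.2 (x - y) ≤ 0) : x ∈ Minty S {x, y} := by
  refine ⟨Set.mem_insert x _, fun r hr hrK => ?_⟩
  rcases hrK with hrx | hry
  · simp [hrx]
  · exact hry ▸ h r hr hry

theorem qrel_of_mem_qpolar_of_minty_subset {S S' : Set (X × StrongDual ℝ X)}
    (hSS' : ∀ K, Minty S K ⊆ Minty S' K) {p q : X × StrongDual ℝ X}
    (hp : p ∈ qpolar S) (hq : q ∈ S') : qrel p q := by
  by_contra hpq
  obtain ⟨hpos_p, hpos_q⟩ := lt_min_iff.1 (not_le.1 hpq)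
  have hmem : p.1 ∈ Minty S {p.1, q.1} := mem_minty_pair fun r hr hrq => by
    have hpr := hp r hr
    rw [qrel, hrq] at hpr
    exact (min_le_iff.1 hpr).resolve_left hpos_p.not_ge
  exact hpos_q.not_ge ((hSS' _ hmem).2 q hq (Set.mem_insert_of_mem _ rfl))

theorem stmt19_general (T : Set (X × StrongDual ℝ X)) :
    (QuasiMono T ↔ ∀ K : Set X, Minty (qpolar T) K ⊆ Minty T K) ∧
    ((∀ K : Set X, Minty (qpolar T) K = Minty T K) →
      QuasiMono T ∧ QuasiMono (qpolar T)) := by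
  have of_minty_subset : (∀ K, Minty (qpolar T) K ⊆ Minty T K) → QuasiMono T :=
    fun h _ hp _ hq => qrel_of_mem_qpolar_of_minty_subset h (subset_qpolar_qpolar T hp) hq
  refine ⟨⟨fun hT => minty_anti (quasiMono_iff_subset_qpolar.1 hT), of_minty_subset⟩,
    fun heq => ⟨of_minty_subset fun K => (heq K).le, ?_⟩⟩
  exact fun _ hp _ hq => qrel_of_mem_qpolar_of_minty_subset (fun K => (heq K).ge) hp hq

theorem stmt19 [CompleteSpace X] (T : Set (X × StrongDual ℝ X)) :
    (QuasiMono T ↔ ∀ K : Set X, Minty (qpolar T) K ⊆ Minty T K) ∧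
    ((∀ K : Set X, Minty (qpolar T) K = Minty T K) →
      QuasiMono T ∧ QuasiMono (qpolar T)) :=
  stmt19_general T
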